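/- arXiv:math/0508615 — 3 statements merged into one kernel-verified Lean document; each statement's English description precedes it below -/
import Mathlib

section
/- Let φ : (ℂ,0) → (ℂ^n,0) be a nonzero analytic curve-germ and let P ⊆ ℂ^n be a linear subspace with ideal I(P). Then the tangent line to the image of φ at the origin lies in P if and only if φ*(I(P)) ⊆ m_1 φ*(m_n), where m_1 is the maximal ideal of O_1 and m_n the maximal ideal of O_n. -/
/-!
The ideal `m₁ φ*(m_n)` consists of the germs of order `> l`: since `v ≠ 0`, some component
`φ j = t ^ l ψ` has `ψ 0 ≠ 0`, so a germ `t ^ l g` with `g 0 = 0` equals `(g / ψ) φ j`; conversely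
every `aᵢ φᵢ` is `o(t ^ l)`. If `h` vanishes on `P`, its differential kills `P`, so for `v ∈ P`
we get `h (φ t) = dh₀ (t ^ l v) + o(t ^ l) = o(t ^ l)`. If `v ∉ P`, a linear form vanishing on
`P` but not at `v` is a germ `h` with `h (φ t) ∼ t ^ l h v`, of order exactly `l`.
-/

open Filter Topology

noncomputable section

abbrev Emc (n : ℕ) := Fin n → ℂ

theorem exists_analyticAt_eq_pow_smul_of_tendsto {E : Type*} [NormedAddCommGroup E]
    [NormedSpace ℂ E] [CompleteSpace E] {f : ℂ → E} (hf : AnalyticAt ℂ f 0) {m : ℕ} {c : E}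
    (hlim : Tendsto (fun t => (t ^ m)⁻¹ • f t) (𝓝[≠] 0) (𝓝 c)) :
    ∃ g : ℂ → E, AnalyticAt ℂ g 0 ∧ g 0 = c ∧ ∀ᶠ t in 𝓝 0, f t = t ^ m • g t := by
  classical
  set g := Function.update (fun t : ℂ => (t ^ m)⁻¹ • f t) 0 c
  have hmero : MeromorphicAt g 0 := by
    apply MeromorphicAt.update
    fun_prop
  have hg : AnalyticAt ℂ g 0 :=
    Complex.analyticAt_of_differentiable_on_punctured_nhds_of_continuousAt
      (hmero.eventually_analyticAt.mono fun _ h => h.differentiableAt)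
      (continuousAt_update_same.mpr hlim)
  refine ⟨g, hg, Function.update_self .., ?_⟩
  refine (hf.frequently_eq_iff_eventually_eq ((analyticAt_id.pow m).smul hg)).mp ?_
  refine Eventually.frequently ?_
  filter_upwards [self_mem_nhdsWithin] with t (ht : t ≠ 0)
  simp [g, smul_smul, ht]

theorem HasFDerivAt.tendsto_inv_smul_comp {𝕜 E F α : Type*} [NontriviallyNormedField 𝕜]
    [NormedAddCommGroup E] [NormedSpace 𝕜 E] [NormedAddCommGroup F] [NormedSpace 𝕜 F]
    {h : E → F} {L : E →L[𝕜] F} (hh : HasFDerivAt h L 0) (h0 : h 0 = 0) {ℓ : Filter α}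
    {r : α → 𝕜} {c : α → E} {v : E} (hc : Tendsto c ℓ (𝓝 0))
    (hlim : Tendsto (fun x => (r x)⁻¹ • c x) ℓ (𝓝 v)) :
    Tendsto (fun x => (r x)⁻¹ • h (c x)) ℓ (𝓝 (L v)) := by
  have hrem : (fun z => h z - L z) =o[𝓝 0] (fun z => z) := by simpa [h0] using hh.isLittleO
  have hscaled : (fun x => (r x)⁻¹ • (h (c x) - L (c x))) =o[ℓ] (fun _ => (1 : 𝕜)) :=
    ((Asymptotics.isBigO_refl (fun x => (r x)⁻¹) ℓ).smul_isLittleO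
      (hrem.comp_tendsto hc)).trans_isBigO (hlim.isBigO_one 𝕜)
  have hL : Tendsto (fun x => L ((r x)⁻¹ • c x)) ℓ (𝓝 (L v)) := (L.continuous.tendsto v).comp hlim
  simpa [smul_sub] using (Asymptotics.isLittleO_one_iff 𝕜).mp hscaled |>.add hL

theorem HasFDerivAt.apply_eq_zero_of_eventually_eq_zero_on {𝕜 E F : Type*}
    [NontriviallyNormedField 𝕜] [NormedAddCommGroup E] [NormedSpace 𝕜 E] [NormedAddCommGroup F]
    [NormedSpace 𝕜 F] {h : E → F} {L : E →L[𝕜] F} (hh : HasFDerivAt h L 0) {P : Submodule 𝕜 E}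
    (hP : ∀ᶠ z in 𝓝 0, z ∈ P → h z = 0) {v : E} (hv : v ∈ P) : L v = 0 := by
  have hcomp : HasFDerivAt (h ∘ P.subtype) (L.comp P.subtypeL) 0 := by
    simpa using hh.comp (0 : P) P.subtypeL.hasFDerivAt
  have hzero : HasFDerivAt (h ∘ P.subtype) (0 : P →L[𝕜] F) 0 := by
    refine (hasFDerivAt_const 0 0).congr_of_eventuallyEq ?_
    filter_upwards [P.subtypeL.continuous.tendsto' 0 0 rfl |>.eventually hP] with z hz
    exact hz z.2
  exact DFunLike.congr_fun (hcomp.unique hzero) ⟨v, hv⟩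

/-- `f ∈ m₁ · φ*(m_n)` as germs at `0`: the ideal `φ*(m_n)` is generated by the components
`φ i`. -/
def MemMaximalIdealMulPullback {n : ℕ} (φ : ℂ → Emc n) (f : ℂ → ℂ) : Prop :=
  ∃ a : Fin n → ℂ → ℂ, (∀ i, AnalyticAt ℂ (a i) 0 ∧ a i 0 = 0) ∧
    ∀ᶠ t in 𝓝 0, f t = ∑ i, a i t * φ t i

theorem MemMaximalIdealMulPullback.tendsto_inv_pow_mul {n : ℕ} {φ : ℂ → Emc n} {f : ℂ → ℂ}
    (hf : MemMaximalIdealMulPullback φ f) {l : ℕ} {v : Emc n}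
    (hlim : Tendsto (fun t => (t ^ l)⁻¹ • φ t) (𝓝[≠] 0) (𝓝 v)) :
    Tendsto (fun t => (t ^ l)⁻¹ * f t) (𝓝[≠] 0) (𝓝 0) := by
  obtain ⟨a, ha, hfa⟩ := hf
  have hterm (i : Fin n) : Tendsto (fun t => a i t * ((t ^ l)⁻¹ * φ t i)) (𝓝[≠] 0) (𝓝 0) := by
    have hai : Tendsto (a i) (𝓝[≠] 0) (𝓝 0) := by
      simpa only [(ha i).2] using (ha i).1.continuousAt.tendsto.mono_left nhdsWithin_le_nhds
    simpa using hai.mul (tendsto_pi_nhds.mp hlim i)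
  refine (tendsto_finsetSum Finset.univ fun i _ => hterm i).congr' ?_ |>.trans (by simp)
  filter_upwards [hfa.filter_mono nhdsWithin_le_nhds] with t ht
  simp only [ht, Finset.mul_sum]
  exact Finset.sum_congr rfl fun i _ => by ring

theorem memMaximalIdealMulPullback_of_tendsto {n : ℕ} {φ : ℂ → Emc n} (hφ : AnalyticAt ℂ φ 0)
    {l : ℕ} {v : Emc n} (hv : v ≠ 0) (hlim : Tendsto (fun t => (t ^ l)⁻¹ • φ t) (𝓝[≠] 0) (𝓝 v))
    {f : ℂ → ℂ} (hf : AnalyticAt ℂ f 0) (hfl : Tendsto (fun t => (t ^ l)⁻¹ * f t) (𝓝[≠] 0) (𝓝 0)) :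
    MemMaximalIdealMulPullback φ f := by
  obtain ⟨g, hg, hg0, hfg⟩ := exists_analyticAt_eq_pow_smul_of_tendsto hf hfl
  obtain ⟨j, hj⟩ : ∃ j, v j ≠ 0 := Function.ne_iff.mp hv
  obtain ⟨ψ, hψ, hψ0, hφψ⟩ := exists_analyticAt_eq_pow_smul_of_tendsto
    (analyticAt_pi_iff.mp hφ j) (tendsto_pi_nhds.mp hlim j)
  refine ⟨fun i t => if i = j then g t / ψ t else 0, fun i => ?_, ?_⟩
  · by_cases hij : i = j
    · simp only [hij, if_true, hg0, zero_div, and_true]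
      exact hg.div hψ (hψ0 ▸ hj)
    · simp [hij, analyticAt_const]
  · filter_upwards [hfg, hφψ, hψ.continuousAt.eventually_ne (hψ0 ▸ hj)] with t hft hφt hψt
    simp only [hft, hφt, smul_eq_mul, ite_mul, zero_mul, Finset.sum_ite_eq', Finset.mem_univ,
      if_true]
    field_simp

theorem statement1_general {n : ℕ} (φ : ℂ → Emc n) (hφ : AnalyticAt ℂ φ 0) (hφ0 : φ 0 = 0)
    (P : Submodule ℂ (Emc n))
    (l : ℕ) (v : Emc n) (hv : v ≠ 0)
    (hlim : Tendsto (fun t => (t ^ l)⁻¹ • φ t) (𝓝[≠] (0 : ℂ)) (𝓝 v)) :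
    v ∈ P ↔
      ∀ h : Emc n → ℂ, AnalyticAt ℂ h 0 → (∀ᶠ z in 𝓝 (0 : Emc n), z ∈ P → h z = 0) →
        ∃ a : Fin n → ℂ → ℂ, (∀ i, AnalyticAt ℂ (a i) 0 ∧ a i 0 = 0) ∧
          ∀ᶠ t in 𝓝 (0 : ℂ), h (φ t) = ∑ i, a i t * φ t i := by
  constructor
  · intro hvP h hh hP
    have hφ_tendsto : Tendsto φ (𝓝[≠] 0) (𝓝 0) :=
      hφ0 ▸ hφ.continuousAt.tendsto.mono_left nhdsWithin_le_nhds
    have hDh := hh.differentiableAt.hasFDerivAt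
    refine memMaximalIdealMulPullback_of_tendsto hφ hv hlim (hh.comp_of_eq hφ hφ0) ?_
    simpa [hDh.apply_eq_zero_of_eventually_eq_zero_on hP hvP] using
      hDh.tendsto_inv_smul_comp (hP.self_of_nhds P.zero_mem) hφ_tendsto hlim
  · intro hP
    by_contra hvP
    obtain ⟨L, hLv, hLP⟩ := Submodule.exists_dual_map_eq_bot_of_notMem hvP inferInstance
    set L' := LinearMap.toContinuousLinearMap L
    have hL'P : ∀ᶠ z in 𝓝 0, z ∈ P → L' z = 0 :=
      Eventually.of_forall fun z hz => LinearMap.le_ker_iff_map.mpr hLP hz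
    have hL'φ : Tendsto (fun t => (t ^ l)⁻¹ * L' (φ t)) (𝓝[≠] 0) (𝓝 (L' v)) :=
      ((L'.continuous.tendsto v).comp hlim).congr fun t => L'.map_smul _ _
    exact hLv <| tendsto_nhds_unique hL'φ <|
      MemMaximalIdealMulPullback.tendsto_inv_pow_mul (hP L' (L'.analyticAt 0) hL'P) hlim

/-- **Proposition 1.7.**  Let `φ : (ℂ,0) → (ℂ^n,0)` be a nonzero analytic curve germ, with
tangent direction `v ≠ 0` at the origin (i.e. `φ(t)/t^l → v` where `l` is the minimal order
of vanishing of the components of `φ`), and let `P` be a linear subspace.  Then the tangent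
line of `φ` at the origin lies in `P` iff `φ*(I(P)) ⊆ m₁ φ*(m_n)`, i.e. iff for every
analytic germ `h` vanishing on `P`, `h ∘ φ` is a combination `∑ aᵢ · (φᵢ)` with analytic
coefficients `aᵢ` vanishing at `0`. -/
theorem statement1 {n : ℕ} (φ : ℂ → Emc n) (hφ : AnalyticAt ℂ φ 0) (hφ0 : φ 0 = 0)
    (P : Submodule ℂ (Emc n))
    (l : ℕ) (hl : 1 ≤ l) (v : Emc n) (hv : v ≠ 0)
    (hlim : Tendsto (fun t => (t ^ l)⁻¹ • φ t) (𝓝[≠] (0 : ℂ)) (𝓝 v)) :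
    v ∈ P ↔
      ∀ h : Emc n → ℂ, AnalyticAt ℂ h 0 → (∀ᶠ z in 𝓝 (0 : Emc n), z ∈ P → h z = 0) →
        ∃ a : Fin n → ℂ → ℂ, (∀ i, AnalyticAt ℂ (a i) 0 ∧ a i 0 = 0) ∧
          ∀ᶠ t in 𝓝 (0 : ℂ), h (φ t) = ∑ i, a i t * φ t i :=
  statement1_general φ hφ hφ0 P l v hv hlim

end
end

section
/- Let P = Γ(f) be an analytic direct transversal to Y and let φ(t) = (x(t),y(t)) be an analytic curve-germ at 0 in k^{n+k}. Then |y(t) − f(x(t))| = o(|x(t)|^r) if and only if φ*I(P) ⊆ m_1 φ*(m_n^r). -/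
/-! Write the curve as `x(t) = t ^ s • v(t)` with `v(0) ≠ 0`, where `s` is its order at `0`. Then
`‖x(t)‖ = O(|t| ^ s)` and some component `x_l(t) = t ^ s v_l(t)` has `v_l` a unit. Hence an analytic
`u = o(‖x‖ ^ r)` is `o(t ^ (s r))`, so it is `t ^ (s r) c(t)` with `c(0) = 0`, i.e. `c v_l⁻ʳ · x_l ^ r`.
Conversely every monomial of degree `r` in the components of `x` is `O(‖x‖ ^ r)`. -/

open Filter Topology Asymptotics

noncomputable section

variable {𝕜 : Type} [RCLike 𝕜]

/-- `𝕜^n`. -/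
abbrev Em (𝕜 : Type) [RCLike 𝕜] (n : ℕ) := Fin n → 𝕜

/-- `u` belongs to the ideal `m₁ · φ*(m_n^r)` of `O₁` along the curve `x(t)`:
`u(t)` is a finite combination of degree-`r` monomials in the components of `x(t)` with
analytic coefficients vanishing at `0`. -/
def memM1MnPow {n : ℕ} (r : ℕ) (x : 𝕜 → Em 𝕜 n) (u : 𝕜 → 𝕜) : Prop :=
  ∃ (m : ℕ) (a : Fin m → 𝕜 → 𝕜) (α : Fin m → (Fin n → ℕ)),
    (∀ i, AnalyticAt 𝕜 (a i) 0 ∧ a i 0 = 0 ∧ (∑ l, α i l) = r) ∧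
    ∀ᶠ t in 𝓝 (0 : 𝕜), u t = ∑ i, a i t * ∏ l, (x t l) ^ (α i l)

section OrderAsymptotics

variable {𝕂 E : Type*} [NontriviallyNormedField 𝕂] [NormedAddCommGroup E] [NormedSpace 𝕂 E]

theorem isBigO_pow_pow_of_le {m N : ℕ} (h : m ≤ N) :
    (fun t : 𝕂 => t ^ N) =O[𝓝 0] fun t => t ^ m := by
  obtain ⟨p, rfl⟩ := Nat.exists_eq_add_of_le h
  have hbdd : (fun t : 𝕂 => t ^ p) =O[𝓝 0] fun _ => (1 : 𝕂) :=
    ((continuous_pow p).continuousAt (x := (0 : 𝕂))).tendsto.isBigO_one 𝕂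
  simpa only [pow_add, mul_one] using (isBigO_refl (fun t : 𝕂 => t ^ m) _).mul hbdd

theorem AnalyticAt.lt_analyticOrderAt_of_isLittleO {g : 𝕂 → E} (hg : AnalyticAt 𝕂 g 0) {N : ℕ}
    (h : g =o[𝓝 0] fun t => t ^ N) : (N : ℕ∞) < analyticOrderAt g 0 := by
  by_contra! hle
  obtain ⟨m, hm⟩ := ENat.ne_top_iff_exists.mp (hle.trans_lt (ENat.natCast_lt_top N)).ne
  rw [← hm, Nat.cast_le] at hle
  obtain ⟨u, hu, hu0, hgu⟩ := (hg.analyticOrderAt_eq_natCast (n := m)).mp hm.symm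
  simp only [sub_zero] at hgu
  have hu_bdd_below : (fun _ => (1 : 𝕂)) =O[𝓝 0] u :=
    (isBigO_const_left_iff_pos_le_norm one_ne_zero).mpr ⟨‖u 0‖ / 2, by positivity,
      hu.continuousAt.norm.eventually (eventually_ge_nhds (half_lt_self (norm_pos_iff.mpr hu0)))⟩
  have hpow_le_g : (fun t : 𝕂 => t ^ m) =O[𝓝 0] g := by
    simpa only [smul_eq_mul, mul_one] using
      ((isBigO_refl (fun t : 𝕂 => t ^ m) _).smul hu_bdd_below).trans_eventuallyEq
        (EventuallyEq.symm hgu)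
  refine isLittleO_irrefl (f'' := fun t : 𝕂 => t ^ m) ?_
    ((hpow_le_g.trans_isLittleO h).trans_isBigO (isBigO_pow_pow_of_le hle))
  exact ((eventually_mem_nhdsWithin (a := (0 : 𝕂)) (s := {0}ᶜ)).frequently.mono
    fun t ht => pow_ne_zero m ht).filter_mono nhdsWithin_le_nhds

theorem AnalyticAt.exists_eventuallyEq_pow_smul_of_isLittleO {g : 𝕂 → E}
    (hg : AnalyticAt 𝕂 g 0) {N : ℕ} (h : g =o[𝓝 0] fun t => t ^ N) :
    ∃ c : 𝕂 → E, AnalyticAt 𝕂 c 0 ∧ c 0 = 0 ∧ g =ᶠ[𝓝 0] fun t => t ^ N • c t := by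
  obtain ⟨c, hc, hgc⟩ := (natCast_le_analyticOrderAt hg).mp
    (Order.add_one_le_of_lt (hg.lt_analyticOrderAt_of_isLittleO h))
  refine ⟨fun t => t • c t, analyticAt_id.smul hc, zero_smul _ _, ?_⟩
  filter_upwards [hgc] with t ht
  rw [ht, sub_zero, smul_smul, ← pow_succ]

theorem norm_prod_pow_le_norm_pow_sum {ι : Type*} [Fintype ι] (v : ι → 𝕂) (α : ι → ℕ) :
    ‖∏ l, v l ^ α l‖ ≤ ‖v‖ ^ ∑ l, α l := by
  rw [norm_prod, ← Finset.prod_pow_eq_pow_sum]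
  exact Finset.prod_le_prod (fun _ _ => norm_nonneg _) fun l _ =>
    (norm_pow (v l) (α l)).trans_le (pow_le_pow_left₀ (norm_nonneg _) (norm_le_pi_norm v l) _)

end OrderAsymptotics

section MemM1MnPow

variable {n : ℕ} {r : ℕ} {x : 𝕜 → Em 𝕜 n} {u : 𝕜 → 𝕜}

theorem memM1MnPow.isLittleO (h : memM1MnPow r x u) : u =o[𝓝 0] fun t => ‖x t‖ ^ r := by
  obtain ⟨m, a, α, ha, hu⟩ := h
  refine EventuallyEq.trans_isLittleO hu (IsLittleO.fun_sum fun i _ => ?_)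
  obtain ⟨ha_an, ha0, hα⟩ := ha i
  have ha_small : a i =o[𝓝 0] fun _ => (1 : ℝ) :=
    (isLittleO_one_iff ℝ).mpr (by simpa only [ha0] using ha_an.continuousAt.tendsto)
  have hmono : (fun t => ∏ l, x t l ^ α i l) =O[𝓝 0] fun t => ‖x t‖ ^ r :=
    IsBigO.of_bound 1 (Eventually.of_forall fun t => by
      rw [one_mul, Real.norm_of_nonneg (by positivity), ← hα]
      exact norm_prod_pow_le_norm_pow_sum (x t) (α i))
  simpa only [one_mul] using ha_small.mul_isBigO hmono

theorem memM1MnPow_of_eventuallyEq_mul_monomial {a : 𝕜 → 𝕜} (ha : AnalyticAt 𝕜 a 0)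
    (ha0 : a 0 = 0) {α : Fin n → ℕ} (hα : ∑ l, α l = r)
    (hu : u =ᶠ[𝓝 0] fun t => a t * ∏ l, x t l ^ α l) : memM1MnPow r x u :=
  ⟨1, fun _ => a, fun _ => α, fun _ => ⟨ha, ha0, hα⟩,
    hu.mono fun t ht => by rw [ht, Fin.sum_univ_one]⟩

theorem memM1MnPow_of_eventuallyEq_zero (hu : u =ᶠ[𝓝 0] 0) : memM1MnPow r x u :=
  ⟨0, Fin.elim0, Fin.elim0, fun i => i.elim0, hu.mono fun t ht => by simp [ht]⟩

theorem memM1MnPow_of_isLittleO_of_eventuallyEq_pow_smul (hu : AnalyticAt 𝕜 u 0) {s : ℕ}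
    {v : 𝕜 → Em 𝕜 n} (hv : AnalyticAt 𝕜 v 0) (hxv : x =ᶠ[𝓝 0] fun t => t ^ s • v t)
    {l : Fin n} (hvl : v 0 l ≠ 0) (h : u =o[𝓝 0] fun t => ‖x t‖ ^ r) : memM1MnPow r x u := by
  have hx_bdd : x =O[𝓝 0] fun t => t ^ s := by
    have := (isBigO_refl (fun t : 𝕜 => t ^ s) _).smul (hv.continuousAt.tendsto.isBigO_one 𝕜)
    simpa only [smul_eq_mul, mul_one] using hxv.trans_isBigO this
  have hu_small : u =o[𝓝 0] fun t => t ^ (s * r) := by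
    simpa only [pow_mul] using h.trans_isBigO (hx_bdd.norm_left.pow r)
  obtain ⟨c, hc, hc0, huc⟩ := hu.exists_eventuallyEq_pow_smul_of_isLittleO hu_small
  have hvl_an : AnalyticAt 𝕜 (fun t => v t l) 0 := analyticAt_pi_iff.mp hv l
  refine memM1MnPow_of_eventuallyEq_mul_monomial (a := fun t => c t * (v t l)⁻¹ ^ r)
    (α := Pi.single l r) (hc.mul ((hvl_an.inv hvl).pow r)) (by simp [hc0]) (by simp) ?_
  filter_upwards [huc, hxv, hvl_an.continuousAt.eventually_ne hvl] with t hut hxt hvt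
  simp only [hut, hxt, Pi.smul_apply, smul_eq_mul, Pi.single_apply, pow_ite, pow_zero, inv_pow,
    Finset.prod_ite_eq', Finset.mem_univ, if_true]
  field_simp
  ring

theorem memM1MnPow_of_isLittleO (hx : AnalyticAt 𝕜 x 0) (hu : AnalyticAt 𝕜 u 0) (hu0 : u 0 = 0)
    (h : u =o[𝓝 0] fun t => ‖x t‖ ^ r) : memM1MnPow r x u := by
  cases hord : analyticOrderAt x 0 with
  | top =>
    cases r with
    | zero => exact memM1MnPow_of_eventuallyEq_mul_monomial hu hu0 (α := 0) (by simp) (by simp)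
    | succ r =>
      refine memM1MnPow_of_eventuallyEq_zero (isLittleO_zero_right_iff.mp (h.congr' .rfl ?_))
      filter_upwards [analyticOrderAt_eq_top.mp hord] with t ht
      simp [ht]
  | coe s =>
    obtain ⟨v, hv, hv0, hxv⟩ := hx.analyticOrderAt_eq_natCast.mp hord
    simp only [sub_zero] at hxv
    obtain ⟨l, hl⟩ := Function.ne_iff.mp hv0
    exact memM1MnPow_of_isLittleO_of_eventuallyEq_pow_smul hu hv hxv hl h

end MemM1MnPow

/-- **Lemma 2.8.**  Let `P = Γ(f)` be an analytic direct transversal to `Y = {0} × 𝕜^k` and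
`φ(t) = (x(t), y(t))` an analytic curve germ at `0` in `𝕜^{n+k}`.  Then
`|y(t) − f(x(t))| = o(|x(t)|^r)` iff `φ*I(P) ⊆ m₁ φ*(m_n^r)`, i.e. iff each pullback
`yⱼ(t) − fⱼ(x(t))` of the generators of `I(P) = (y₁−f₁, …, y_k−f_k)` lies in
`m₁ φ*(m_n^r)`. -/
theorem statement3 {n k : ℕ} (r : ℕ)
    (f : Em 𝕜 n → Em 𝕜 k) (hf : AnalyticAt 𝕜 f 0) (hf0 : f 0 = 0)
    (x : 𝕜 → Em 𝕜 n) (y : 𝕜 → Em 𝕜 k)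
    (hx : AnalyticAt 𝕜 x 0) (hy : AnalyticAt 𝕜 y 0) (hx0 : x 0 = 0) (hy0 : y 0 = 0) :
    ((fun t => y t - f (x t)) =o[𝓝 (0 : 𝕜)] (fun t => ‖x t‖ ^ r)) ↔
      ∀ j : Fin k, memM1MnPow r x (fun t => y t j - f (x t) j) := by
  have hfx : AnalyticAt 𝕜 (fun t => f (x t)) 0 := (hx0 ▸ hf : AnalyticAt 𝕜 f (x 0)).comp hx
  have hg : AnalyticAt 𝕜 (fun t => y t - f (x t)) 0 := hy.sub hfx
  rw [isLittleO_pi]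
  exact forall_congr' fun j => ⟨memM1MnPow_of_isLittleO hx (analyticAt_pi_iff.mp hg j)
    (by simp [hx0, hy0, hf0]), memM1MnPow.isLittleO⟩

end
end

section
/- With the set-up below, let φ(t) = (x(t),y(t)) be an analytic curve with φ(0) = 0, φ(t) ∈ W for t ≠ 0, satisfying |y(t)−f(x(t))| = o(|x(t)|^r). Then the inclusion φ*(m_n^{r−1}JM_y(F)) ⊆ φ*(JM(F)_P) (if r ≥ 1), respectively φ*(JM_y(F)) ⊆ φ*(m_n JM(F)_P) (if r = 0), holds if and only if φ*(m_n^r JM_y(F)) ⊆ φ*(m_n JM(F)_P + I(P)JM_y(F)). -/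
/- Statement 4 (Lemma 2.9): equivalence of two pullback module inclusions along a curve. -/

open Filter Topology Asymptotics

noncomputable section
set_option synthInstance.maxHeartbeats 1000000
set_option maxHeartbeats 2000000

variable {𝕜 : Type} [RCLike 𝕜]

/-- The monomial `x^α`. -/
def mono {n : ℕ} (α : Fin n → ℕ) (x : Em 𝕜 n) : 𝕜 := ∏ l, (x l) ^ (α l)

/-- `∂F/∂yⱼ`. -/
def dyF {n k p : ℕ} (F : Em 𝕜 n × Em 𝕜 k → Em 𝕜 p) (j : Fin k)
    (z : Em 𝕜 n × Em 𝕜 k) : Em 𝕜 p :=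
  fderiv 𝕜 F z (0, Pi.single j 1)

/-- The `i`-th generator of `JM(F)_P`: `∂F/∂xᵢ + Σⱼ (∂fⱼ/∂xᵢ) ∂F/∂yⱼ`. -/
def JMPgen {n k p : ℕ} (F : Em 𝕜 n × Em 𝕜 k → Em 𝕜 p) (f : Em 𝕜 n → Em 𝕜 k) (i : Fin n)
    (z : Em 𝕜 n × Em 𝕜 k) : Em 𝕜 p :=
  fderiv 𝕜 F z (Pi.single i 1, fderiv 𝕜 f z.1 (Pi.single i 1))

/-- Generators of `JM_y(F)`. -/
def JMyS {n k p : ℕ} (F : Em 𝕜 n × Em 𝕜 k → Em 𝕜 p) : Set (Em 𝕜 n × Em 𝕜 k → Em 𝕜 p) :=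
  {h | ∃ j : Fin k, h = dyF F j}

/-- Generators of `JM(F)_P`. -/
def JMPS {n k p : ℕ} (F : Em 𝕜 n × Em 𝕜 k → Em 𝕜 p) (f : Em 𝕜 n → Em 𝕜 k) :
    Set (Em 𝕜 n × Em 𝕜 k → Em 𝕜 p) :=
  {h | ∃ i : Fin n, h = JMPgen F f i}

/-- Generators of `m_n^r · M` for a generating set `M`. -/
def mnPow {n k p : ℕ} (r : ℕ) (Gens : Set (Em 𝕜 n × Em 𝕜 k → Em 𝕜 p)) :
    Set (Em 𝕜 n × Em 𝕜 k → Em 𝕜 p) :=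
  {h | ∃ α : Fin n → ℕ, (∑ l, α l) = r ∧ ∃ g ∈ Gens, h = fun z => mono α z.1 • g z}

/-- Generators of `I(P)·JM_y(F)` where `P = Γ(f)`. -/
def IPJMy {n k p : ℕ} (F : Em 𝕜 n × Em 𝕜 k → Em 𝕜 p) (f : Em 𝕜 n → Em 𝕜 k) :
    Set (Em 𝕜 n × Em 𝕜 k → Em 𝕜 p) :=
  {h | ∃ (j j' : Fin k), h = fun z => (z.2 j - f z.1 j) • dyF F j' z}

/-- `u` lies in the `O₁`-module generated by the pullbacks along `φ` of the members of
`Gens`. -/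
def MemPB {Z : Type} {p : ℕ} (Gens : Set (Z → Em 𝕜 p)) (φ : 𝕜 → Z) (u : 𝕜 → Em 𝕜 p) :
    Prop :=
  ∃ (m : ℕ) (a : Fin m → 𝕜 → 𝕜) (g : Fin m → (Z → Em 𝕜 p)),
    (∀ i, AnalyticAt 𝕜 (a i) 0) ∧ (∀ i, g i ∈ Gens) ∧
    ∀ᶠ t in 𝓝 (0 : 𝕜), u t = ∑ i, a i t • g i (φ t)

/-!
Since `x(t) ≠ 0` on `W`, write `x(t) = t ^ d • V(t)` with `V(0) ≠ 0` and pick a coordinate `l`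
with `V_l(0) ≠ 0`. Then `x_l` divides every coordinate of `x`, is nonzero for `t ≠ 0`, and the
jet condition gives `y - f(x) = t • x_l ^ r • w`. Hence the pullback of `I(P) JM_y(F)` lies in
`t • φ*(m_n^r JM_y(F))`, and Nakayama's lemma over the convergent power series in `t` yields
`φ*(m_n^r JM_y(F)) ⊆ φ*(m_n JM(F)_P)`. For `r ≥ 1` it remains to divide the generators
`x_l x^β ∂F/∂y_j` of `φ*(m_n^r JM_y(F))` by `x_l`; the converse inclusions are immediate.
-/

section OneVariable

variable {E : Type*} [NormedAddCommGroup E] [NormedSpace 𝕜 E]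

theorem exists_eventuallyEq_pow_succ_smul_of_isLittleO {g : 𝕜 → E} {m : ℕ}
    (hg : AnalyticAt 𝕜 g 0) (h : g =o[𝓝 0] fun t => ‖t‖ ^ m) :
    ∃ w : 𝕜 → E, AnalyticAt 𝕜 w 0 ∧ ∀ᶠ t in 𝓝 0, g t = t ^ (m + 1) • w t := by
  suffices ((m + 1 : ℕ) : ℕ∞) ≤ analyticOrderAt g 0 by
    simpa using (natCast_le_analyticOrderAt hg).1 this
  by_contra! hlt
  obtain ⟨n, hn⟩ := ENat.ne_top_iff_exists.1 (hlt.trans_le le_top).ne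
  obtain ⟨v, hv, hv0, hgv⟩ := hg.analyticOrderAt_eq_natCast.1 hn.symm
  have hnm : n ≤ m := by rw [← hn] at hlt; exact Nat.lt_succ_iff.1 (by exact_mod_cast hlt)
  have hpow : (fun t : 𝕜 => ‖t‖ ^ m) =O[𝓝 0] fun t => t ^ n := by
    simp_rw [← norm_pow]
    rcases hnm.eq_or_lt with rfl | hlt
    · exact (isBigO_refl _ _).norm_left
    · exact (isLittleO_pow_pow hlt).isBigO.norm_left
  apply hv0
  refine tendsto_nhds_unique (l := 𝓝[≠] 0)
    (hv.continuousAt.tendsto.mono_left nhdsWithin_le_nhds) ?_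
  refine ((h.trans_isBigO hpow).mono nhdsWithin_le_nhds).tendsto_inv_smul_nhds_zero.congr' ?_
  filter_upwards [self_mem_nhdsWithin, hgv.filter_mono nhdsWithin_le_nhds] with t ht hgt
  rw [hgt, sub_zero, inv_smul_smul₀ (pow_ne_zero _ ht)]

theorem AnalyticAt.eventuallyEq_of_smul_eventuallyEq {s : 𝕜 → 𝕜} {u v : 𝕜 → E}
    (hu : AnalyticAt 𝕜 u 0) (hv : AnalyticAt 𝕜 v 0) (hs : ∀ᶠ t in 𝓝[≠] 0, s t ≠ 0)
    (h : ∀ᶠ t in 𝓝 0, s t • u t = s t • v t) : u =ᶠ[𝓝 0] v :=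
  (hu.frequently_eq_iff_eventually_eq hv).1 <| Eventually.frequently <| by
    filter_upwards [hs, h.filter_mono nhdsWithin_le_nhds] with t hst h
    exact smul_right_injective E hst h

theorem AnalyticAt.clm_apply {F G : Type*} [NormedAddCommGroup F] [NormedSpace 𝕜 F]
    [NormedAddCommGroup G] [NormedSpace 𝕜 G] {A : 𝕜 → F →L[𝕜] G} {v : 𝕜 → F} {t₀ : 𝕜}
    (hA : AnalyticAt 𝕜 A t₀) (hv : AnalyticAt 𝕜 v t₀) : AnalyticAt 𝕜 (fun t => A t (v t)) t₀ :=
  ((ContinuousLinearMap.apply 𝕜 G).flip.analyticAt_bilinear (A t₀, v t₀)).comp₂ hA hv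

end OneVariable

section CurveNormalForm

variable {ι : Type*} [Fintype ι] {x V : 𝕜 → ι → 𝕜} {d : ℕ} {l : ι}

theorem exists_eventuallyEq_mul_of_eventuallyEq_pow_smul (hV : AnalyticAt 𝕜 V 0)
    (hl : V 0 l ≠ 0) (hxV : ∀ᶠ t in 𝓝 0, x t = t ^ d • V t) (l' : ι) :
    ∃ b : 𝕜 → 𝕜, AnalyticAt 𝕜 b 0 ∧ ∀ᶠ t in 𝓝 0, x t l' = b t * x t l := by
  have hVl : AnalyticAt 𝕜 (fun t => V t l) 0 := analyticAt_pi_iff.1 hV l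
  refine ⟨fun t => V t l' / V t l, (analyticAt_pi_iff.1 hV l').div hVl hl, ?_⟩
  filter_upwards [hxV, hVl.continuousAt.eventually_ne hl] with t hxt hVt
  simp only [hxt, Pi.smul_apply, smul_eq_mul]
  field_simp

theorem eventually_ne_zero_of_eventuallyEq_pow_smul (hV : AnalyticAt 𝕜 V 0)
    (hl : V 0 l ≠ 0) (hxV : ∀ᶠ t in 𝓝 0, x t = t ^ d • V t) :
    ∀ᶠ t in 𝓝[≠] 0, x t l ≠ 0 := by
  have hVl : AnalyticAt 𝕜 (fun t => V t l) 0 := analyticAt_pi_iff.1 hV l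
  filter_upwards [self_mem_nhdsWithin,
    (hxV.and (hVl.continuousAt.eventually_ne hl)).filter_mono nhdsWithin_le_nhds]
    with t ht ⟨hxt, hVt⟩
  simp only [hxt, Pi.smul_apply, smul_eq_mul]
  exact mul_ne_zero (pow_ne_zero _ ht) hVt

/-- A germ that is `o(‖x‖ ^ r)` is divisible by `t * (x l) ^ r`, because `x l` has the
minimal vanishing order `d` among the coordinates of `x`. -/
theorem exists_eventuallyEq_smul_pow_of_isLittleO {E : Type*} [NormedAddCommGroup E]
    [NormedSpace 𝕜 E] (hV : AnalyticAt 𝕜 V 0) (hl : V 0 l ≠ 0)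
    (hxV : ∀ᶠ t in 𝓝 0, x t = t ^ d • V t) {g : 𝕜 → E} {r : ℕ} (hg : AnalyticAt 𝕜 g 0)
    (hgx : g =o[𝓝 0] fun t => ‖x t‖ ^ r) :
    ∃ w : 𝕜 → E, AnalyticAt 𝕜 w 0 ∧ ∀ᶠ t in 𝓝 0, g t = (t * x t l ^ r) • w t := by
  have hVl : AnalyticAt 𝕜 (fun t => V t l) 0 := analyticAt_pi_iff.1 hV l
  have hxO : (fun t => ‖x t‖) =O[𝓝 0] fun t => ‖t‖ ^ d := by
    have hx : x =O[𝓝 0] fun t => t ^ d :=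
      ((isBigO_refl (fun t : 𝕜 => t ^ d) (𝓝 0)).smul (hV.continuousAt.tendsto.isBigO_one 𝕜)).congr'
        (hxV.mono fun t ht => ht.symm) (Eventually.of_forall fun t => by simp)
    simpa using hx.norm_norm
  have hgt : g =o[𝓝 0] fun t => ‖t‖ ^ (d * r) := by
    simpa [← pow_mul] using hgx.trans_isBigO (hxO.pow r)
  obtain ⟨w, hw, hgw⟩ := exists_eventuallyEq_pow_succ_smul_of_isLittleO hg hgt
  refine ⟨fun t => (V t l ^ r)⁻¹ • w t, ((hVl.pow r).inv (pow_ne_zero r hl)).smul hw, ?_⟩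
  filter_upwards [hgw, hxV, hVl.continuousAt.eventually_ne hl] with t hgt hxt hVt
  rw [hgt, hxt, smul_smul, Pi.smul_apply, smul_eq_mul]
  congr 1
  field_simp
  ring

end CurveNormalForm

section Monomials

variable {n : ℕ}

theorem mono_zero (x : Em 𝕜 n) : mono 0 x = 1 := by
  simp [mono]

theorem mono_add (α β : Fin n → ℕ) (x : Em 𝕜 n) : mono (α + β) x = mono α x * mono β x := by
  simp only [mono, Pi.add_apply, pow_add, Finset.prod_mul_distrib]

theorem mono_single (l : Fin n) (r : ℕ) (x : Em 𝕜 n) : mono (Pi.single l r) x = x l ^ r := by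
  rw [mono, Finset.prod_eq_single l (fun l' _ hl' => by simp [hl']) (by simp)]
  simp

theorem exists_eq_add_single_of_sum_eq_succ {α : Fin n → ℕ} {m : ℕ} (h : ∑ l, α l = m + 1) :
    ∃ (l : Fin n) (β : Fin n → ℕ), ∑ l', β l' = m ∧ α = β + Pi.single l 1 := by
  obtain ⟨l, hl⟩ : ∃ l, α l ≠ 0 := by
    by_contra! hα
    simp [hα] at h
  refine ⟨l, Function.update α l (α l - 1), ?_, ?_⟩
  · have := Finset.add_sum_erase Finset.univ α (Finset.mem_univ l)
    rw [Finset.sum_update_of_mem (Finset.mem_univ l), ← Finset.erase_eq]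
    omega
  · ext l'
    rcases eq_or_ne l' l with rfl | hl'
    · simp only [Pi.add_apply, Function.update_self, Pi.single_eq_same]
      omega
    · simp [hl']

end Monomials

section MonomialMultiples

variable {n k p : ℕ} {G : Set (Em 𝕜 n × Em 𝕜 k → Em 𝕜 p)} {h : Em 𝕜 n × Em 𝕜 k → Em 𝕜 p}

theorem mem_mnPow_zero : h ∈ mnPow 0 G ↔ h ∈ G := by
  constructor
  · rintro ⟨α, hα, g, hg, rfl⟩
    obtain rfl : α = 0 := funext fun l => Finset.sum_eq_zero_iff.1 hα l (Finset.mem_univ l)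
    simpa [mono_zero] using hg
  · intro hh
    exact ⟨0, by simp, h, hh, by simp [mono_zero]⟩

theorem exists_eq_coord_smul_of_mem_mnPow_succ {m : ℕ} (hh : h ∈ mnPow (m + 1) G) :
    ∃ (l : Fin n), ∃ h' ∈ mnPow m G, h = fun z => z.1 l • h' z := by
  obtain ⟨α, hα, g, hg, rfl⟩ := hh
  obtain ⟨l, β, hβ, rfl⟩ := exists_eq_add_single_of_sum_eq_succ hα
  refine ⟨l, _, ⟨β, hβ, g, hg, rfl⟩, ?_⟩
  ext z : 1
  rw [mono_add, mono_single, pow_one, smul_smul, mul_comm]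

theorem coord_smul_mem_mnPow_succ {m : ℕ} (l : Fin n) (hh : h ∈ mnPow m G) :
    (fun z => z.1 l • h z) ∈ mnPow (m + 1) G := by
  obtain ⟨α, hα, g, hg, rfl⟩ := hh
  refine ⟨α + Pi.single l 1, by simp [Finset.sum_add_distrib, hα], g, hg, ?_⟩
  ext z : 1
  rw [mono_add, mono_single, pow_one, smul_smul, mul_comm]

theorem mem_mnPow_one : h ∈ mnPow 1 G ↔ ∃ (l : Fin n), ∃ g ∈ G, h = fun z => z.1 l • g z := by
  constructor
  · intro hh
    obtain ⟨l, h', hh', rfl⟩ := exists_eq_coord_smul_of_mem_mnPow_succ (m := 0) hh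
    exact ⟨l, h', mem_mnPow_zero.1 hh', rfl⟩
  · rintro ⟨l, g, hg, rfl⟩
    exact coord_smul_mem_mnPow_succ l (mem_mnPow_zero.2 hg)

end MonomialMultiples

namespace MemPB

variable {Z : Type} {p : ℕ} {G G' : Set (Z → Em 𝕜 p)} {φ : 𝕜 → Z} {u v : 𝕜 → Em 𝕜 p}

theorem congr (h : ∀ᶠ t in 𝓝 0, u t = v t) (hu : MemPB G φ u) : MemPB G φ v := by
  obtain ⟨m, a, g, ha, hg, he⟩ := hu
  exact ⟨m, a, g, ha, hg, by filter_upwards [h, he] with t h1 h2; rwa [← h1]⟩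

theorem mono (hGG' : G ⊆ G') (hu : MemPB G φ u) : MemPB G' φ u := by
  obtain ⟨m, a, g, ha, hg, he⟩ := hu
  exact ⟨m, a, g, ha, fun i => hGG' (hg i), he⟩

theorem of_mem {g : Z → Em 𝕜 p} (hg : g ∈ G) : MemPB G φ (fun t => g (φ t)) :=
  ⟨1, fun _ _ => 1, fun _ => g, fun _ => analyticAt_const, fun _ => hg, by simp⟩

theorem zero : MemPB G φ (fun _ => 0) :=
  ⟨0, Fin.elim0, Fin.elim0, Fin.rec0, Fin.rec0, by simp⟩

theorem smul {b : 𝕜 → 𝕜} (hb : AnalyticAt 𝕜 b 0) (hu : MemPB G φ u) :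
    MemPB G φ (fun t => b t • u t) := by
  obtain ⟨m, a, g, ha, hg, he⟩ := hu
  refine ⟨m, fun i t => b t * a i t, g, fun i => hb.mul (ha i), hg, ?_⟩
  filter_upwards [he] with t ht
  simp only [ht, Finset.smul_sum, smul_smul]

theorem add (hu : MemPB G φ u) (hv : MemPB G φ v) : MemPB G φ (u + v) := by
  obtain ⟨m₁, a₁, g₁, ha₁, hg₁, he₁⟩ := hu
  obtain ⟨m₂, a₂, g₂, ha₂, hg₂, he₂⟩ := hv
  refine ⟨m₁ + m₂, Fin.append a₁ a₂, Fin.append g₁ g₂, Fin.addCases (by simpa) (by simpa),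
    Fin.addCases (by simpa) (by simpa), ?_⟩
  filter_upwards [he₁, he₂] with t h₁ h₂
  simp [h₁, h₂, Fin.sum_univ_add]

theorem sum {ι : Type} (s : Finset ι) {w : ι → 𝕜 → Em 𝕜 p} (h : ∀ q ∈ s, MemPB G φ (w q)) :
    MemPB G φ (fun t => ∑ q ∈ s, w q t) := by
  classical
  induction s using Finset.induction with
  | empty => simpa using zero
  | insert q s hq ih =>
    simp_rw [Finset.sum_insert hq]
    exact add (h q (s.mem_insert_self q)) (ih fun q' hq' => h q' (Finset.mem_insert_of_mem hq'))

theorem analyticAt (hG : ∀ g ∈ G, AnalyticAt 𝕜 (fun t => g (φ t)) 0) (hu : MemPB G φ u) :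
    AnalyticAt 𝕜 u 0 := by
  obtain ⟨m, a, g, ha, hg, he⟩ := hu
  exact (Finset.analyticAt_fun_sum _ fun i _ => (ha i).smul (hG _ (hg i))).congr
    (he.mono fun t ht => ht.symm)

theorem exists_add_of_union (hu : MemPB (G ∪ G') φ u) :
    ∃ u₁ u₂, MemPB G φ u₁ ∧ MemPB G' φ u₂ ∧ ∀ᶠ t in 𝓝 0, u t = u₁ t + u₂ t := by
  classical
  obtain ⟨m, a, g, ha, hg, he⟩ := hu
  refine ⟨fun t => ∑ i, if g i ∈ G then a i t • g i (φ t) else 0,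
    fun t => ∑ i, if g i ∈ G then 0 else a i t • g i (φ t), sum _ fun i _ => ?_,
    sum _ fun i _ => ?_, ?_⟩
  · split_ifs with hi
    · exact smul (ha i) (of_mem hi)
    · exact zero
  · split_ifs with hi
    · exact zero
    · exact smul (ha i) (of_mem ((hg i).resolve_left hi))
  · filter_upwards [he] with t ht
    rw [ht, ← Finset.sum_add_distrib]
    exact Finset.sum_congr rfl fun i _ => by split_ifs <;> simp

theorem exists_smul_of_forall (s : 𝕜 → 𝕜)
    (hG : ∀ g ∈ G, ∃ w, MemPB G' φ w ∧ ∀ᶠ t in 𝓝 0, g (φ t) = s t • w t) (hu : MemPB G φ u) :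
    ∃ w, MemPB G' φ w ∧ ∀ᶠ t in 𝓝 0, u t = s t • w t := by
  obtain ⟨m, a, g, ha, hg, he⟩ := hu
  choose w hw hgw using fun i => hG (g i) (hg i)
  refine ⟨fun t => ∑ i, a i t • w i t, sum _ fun i _ => smul (ha i) (hw i), ?_⟩
  filter_upwards [he, eventually_all.2 hgw] with t ht hgt
  simp only [ht, hgt, Finset.smul_sum, smul_comm (s t)]

theorem trans (hG : ∀ g ∈ G, MemPB G' φ (fun t => g (φ t))) (hu : MemPB G φ u) :
    MemPB G' φ u := by
  obtain ⟨w, hw, huw⟩ := exists_smul_of_forall 1 (fun g hg => ⟨_, hG g hg, by simp⟩) hu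
  exact hw.congr (huw.mono fun t ht => by simpa using ht.symm)

theorem exists_sum_of_range {ι : Type} [Fintype ι] {g : ι → Z → Em 𝕜 p}
    (hu : MemPB (Set.range g) φ u) :
    ∃ b : ι → 𝕜 → 𝕜, (∀ q, AnalyticAt 𝕜 (b q) 0) ∧
      ∀ᶠ t in 𝓝 0, u t = ∑ q, b q t • g q (φ t) := by
  classical
  obtain ⟨m, a, g', ha, hg', he⟩ := hu
  choose σ hσ using hg'
  refine ⟨fun q t => ∑ i with σ i = q, a i t,
    fun q => Finset.analyticAt_fun_sum _ fun i _ => ha i, ?_⟩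
  filter_upwards [he] with t ht
  rw [ht, ← Finset.sum_fiberwise Finset.univ σ]
  refine Finset.sum_congr rfl fun q _ => ?_
  rw [Finset.sum_smul]
  exact Finset.sum_congr rfl fun i hi => by rw [← hσ i, (Finset.mem_filter.1 hi).2]

end MemPB

section AnalyticMatrix

variable {ι : Type} [Fintype ι] [DecidableEq ι]

theorem analyticAt_det {A : 𝕜 → Matrix ι ι 𝕜} (hA : ∀ i j, AnalyticAt 𝕜 (fun t => A t i j) 0) :
    AnalyticAt 𝕜 (fun t => (A t).det) 0 := by
  simp only [Matrix.det_apply, Units.smul_def, zsmul_eq_mul]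
  exact Finset.analyticAt_fun_sum _ fun σ _ =>
    analyticAt_const.mul (Finset.analyticAt_fun_prod _ fun i _ => hA (σ i) i)

theorem analyticAt_inv_apply {A : 𝕜 → Matrix ι ι 𝕜}
    (hA : ∀ i j, AnalyticAt 𝕜 (fun t => A t i j) 0) (h0 : (A 0).det ≠ 0) (i j : ι) :
    AnalyticAt 𝕜 (fun t => (A t)⁻¹ i j) 0 := by
  simp only [Matrix.inv_def, Ring.inverse_eq_inv', Matrix.smul_apply, smul_eq_mul,
    Matrix.adjugate_apply]
  refine ((analyticAt_det hA).inv h0).mul (analyticAt_det fun i' j' => ?_)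
  rcases eq_or_ne i' j with rfl | hi'
  · simpa using analyticAt_const
  · simpa [Matrix.updateRow_ne hi'] using hA i' j'

theorem Matrix.eq_sum_inv_smul_sum_smul {E : Type*} [AddCommGroup E] [Module 𝕜 E]
    {A : Matrix ι ι 𝕜} (hA : IsUnit A.det) (v : ι → E) (q : ι) :
    v q = ∑ q', A⁻¹ q q' • ∑ l, A q' l • v l := by
  simp_rw [Finset.smul_sum, smul_smul]
  rw [Finset.sum_comm]
  simp_rw [← Finset.sum_smul, ← Matrix.mul_apply, Matrix.nonsing_inv_mul A hA, Matrix.one_apply,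
    ite_smul, one_smul, zero_smul, Finset.sum_ite_eq, Finset.mem_univ, if_true]

end AnalyticMatrix

/-- Nakayama's lemma over the ring of convergent power series in `t`, for the submodule
generated by the pullbacks of `G` and the finitely many `g q ∘ φ`. -/
theorem MemPB.of_forall_eventuallyEq_add_smul {Z : Type} {p : ℕ} {G : Set (Z → Em 𝕜 p)}
    {φ : 𝕜 → Z} {ι : Type} [Fintype ι] {g : ι → Z → Em 𝕜 p}
    (h : ∀ q, ∃ u w, MemPB G φ u ∧ MemPB (Set.range g) φ w ∧
      ∀ᶠ t in 𝓝 0, g q (φ t) = u t + t • w t) (q : ι) :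
    MemPB G φ (fun t => g q (φ t)) := by
  classical
  choose u w hu hw huw using h
  choose b hb hwb using fun q => (hw q).exists_sum_of_range
  set A : 𝕜 → Matrix ι ι 𝕜 := fun t => 1 - Matrix.of fun q q' => t * b q q' t
  have hA : ∀ i j, AnalyticAt 𝕜 (fun t => A t i j) 0 := fun i j =>
    analyticAt_const.sub (analyticAt_id.mul (hb i j))
  have hA0 : (A 0).det ≠ 0 := by
    have : A 0 = 1 := by ext; simp [A]
    simp [this]
  have hAu : ∀ᶠ t in 𝓝 0, ∀ q, ∑ l, A t q l • g l (φ t) = u q t := by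
    filter_upwards [eventually_all.2 huw, eventually_all.2 hwb] with t h₁ h₂ q
    simp [A, Matrix.one_apply, sub_smul, Finset.sum_sub_distrib, h₁ q, h₂ q, Finset.smul_sum,
      smul_smul]
  refine MemPB.congr ?_ (MemPB.sum Finset.univ fun q' _ =>
    (hu q').smul (analyticAt_inv_apply hA hA0 q q'))
  filter_upwards [hAu, (analyticAt_det hA).continuousAt.eventually_ne hA0] with t ht hdet
  rw [Matrix.eq_sum_inv_smul_sum_smul (isUnit_iff_ne_zero.2 hdet) (fun l => g l (φ t)) q]
  simp_rw [ht]

section Jacobian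

variable {n k p : ℕ} {F : Em 𝕜 n × Em 𝕜 k → Em 𝕜 p} {f : Em 𝕜 n → Em 𝕜 k}
  {φ : 𝕜 → Em 𝕜 n × Em 𝕜 k}

theorem analyticAt_mono_comp {x : 𝕜 → Em 𝕜 n} (hx : AnalyticAt 𝕜 x 0) (α : Fin n → ℕ) :
    AnalyticAt 𝕜 (fun t => mono α (x t)) 0 :=
  Finset.analyticAt_fun_prod _ fun l _ => (analyticAt_pi_iff.1 hx l).pow (α l)

theorem analyticAt_dyF_comp (hF : AnalyticAt 𝕜 F (φ 0)) (hφ : AnalyticAt 𝕜 φ 0) (j : Fin k) :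
    AnalyticAt 𝕜 (fun t => dyF F j (φ t)) 0 :=
  (hF.fderiv.comp hφ).clm_apply analyticAt_const

theorem analyticAt_JMPgen_comp (hF : AnalyticAt 𝕜 F (φ 0)) (hf : AnalyticAt 𝕜 f (φ 0).1)
    (hφ : AnalyticAt 𝕜 φ 0) (i : Fin n) : AnalyticAt 𝕜 (fun t => JMPgen F f i (φ t)) 0 :=
  (hF.fderiv.comp hφ).clm_apply <| analyticAt_const.prod <|
    (hf.fderiv.comp (f := fun t => (φ t).1) (analyticAt_fst.comp hφ)).clm_apply analyticAt_const

theorem MemPB.coord_smul {G : Set (Em 𝕜 n × Em 𝕜 k → Em 𝕜 p)} {u : 𝕜 → Em 𝕜 p} (l : Fin n)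
    (hu : MemPB G φ u) : MemPB (mnPow 1 G) φ (fun t => (φ t).1 l • u t) := by
  obtain ⟨m, a, g, ha, hg, he⟩ := hu
  refine ⟨m, a, fun i z => z.1 l • g i z, ha, fun i => mem_mnPow_one.2 ⟨l, g i, hg i, rfl⟩, ?_⟩
  filter_upwards [he] with t ht
  simp only [ht, Finset.smul_sum, smul_comm ((φ t).1 l)]

theorem MemPB.of_smul_of_mnPow_one {G : Set (Em 𝕜 n × Em 𝕜 k → Em 𝕜 p)} {u : 𝕜 → Em 𝕜 p}
    {s : 𝕜 → 𝕜} (hs : ∀ᶠ t in 𝓝[≠] 0, s t ≠ 0)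
    (hxs : ∀ l, ∃ b : 𝕜 → 𝕜, AnalyticAt 𝕜 b 0 ∧ ∀ᶠ t in 𝓝 0, (φ t).1 l = b t * s t)
    (hG : ∀ g ∈ G, AnalyticAt 𝕜 (fun t => g (φ t)) 0) (hu : AnalyticAt 𝕜 u 0)
    (h : MemPB (mnPow 1 G) φ (fun t => s t • u t)) : MemPB G φ u := by
  refine Exists.elim (h.exists_smul_of_forall s fun g' hg' => ?_) fun w ⟨hw, hsw⟩ =>
    hw.congr (hu.eventuallyEq_of_smul_eventuallyEq (hw.analyticAt hG) hs hsw).symm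
  obtain ⟨l, g, hg, rfl⟩ := mem_mnPow_one.1 hg'
  obtain ⟨b, hb, hxb⟩ := hxs l
  refine ⟨_, (of_mem hg).smul hb, ?_⟩
  filter_upwards [hxb] with t ht
  rw [ht, smul_smul, mul_comm]

/-- The Nakayama step: since `y - f(x) = t • x^α₀ • c` along `φ`, the pullback of
`I(P) JM_y(F)` lies in `t • φ*(m_n^r JM_y(F))`. -/
theorem memPB_mnPow_one_JMPS_of_union {r : ℕ} {α₀ : Fin n → ℕ} (hα₀ : ∑ l, α₀ l = r)
    {c : Fin k → 𝕜 → 𝕜} (hc : ∀ j, AnalyticAt 𝕜 (c j) 0)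
    (hyf : ∀ j, ∀ᶠ t in 𝓝 0, (φ t).2 j - f (φ t).1 j = t * mono α₀ (φ t).1 * c j t)
    (H : ∀ h ∈ mnPow r (JMyS F),
      MemPB (mnPow 1 (JMPS F f) ∪ IPJMy F f) φ (fun t => h (φ t)))
    {h : Em 𝕜 n × Em 𝕜 k → Em 𝕜 p} (hh : h ∈ mnPow r (JMyS F)) :
    MemPB (mnPow 1 (JMPS F f)) φ (fun t => h (φ t)) := by
  set V : Fin k → Em 𝕜 n × Em 𝕜 k → Em 𝕜 p := fun j z => mono α₀ z.1 • dyF F j z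
  have hIP : ∀ {u}, MemPB (IPJMy F f) φ u →
      ∃ w, MemPB (Set.range V) φ w ∧ ∀ᶠ t in 𝓝 0, u t = t • w t := by
    refine fun hu => hu.exists_smul_of_forall id fun g hg => ?_
    obtain ⟨j, j', rfl⟩ := hg
    refine ⟨_, (MemPB.of_mem (Set.mem_range_self j')).smul (hc j), ?_⟩
    filter_upwards [hyf j] with t ht
    simp only [ht, V, smul_smul, id]
    ring_nf
  have hdecomp : ∀ h ∈ mnPow r (JMyS F), ∃ u w, MemPB (mnPow 1 (JMPS F f)) φ u ∧
      MemPB (Set.range V) φ w ∧ ∀ᶠ t in 𝓝 0, h (φ t) = u t + t • w t := by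
    intro h hh
    obtain ⟨u₁, u₂, hu₁, hu₂, hu⟩ := (H h hh).exists_add_of_union
    obtain ⟨w, hw, hu₂w⟩ := hIP hu₂
    exact ⟨u₁, w, hu₁, hw, by filter_upwards [hu, hu₂w] with t h₁ h₂; rw [h₁, h₂]⟩
  have hV : ∀ j, MemPB (mnPow 1 (JMPS F f)) φ (fun t => V j (φ t)) :=
    MemPB.of_forall_eventuallyEq_add_smul fun j => hdecomp _ ⟨α₀, hα₀, _, ⟨j, rfl⟩, rfl⟩
  obtain ⟨u, w, hu, hw, huw⟩ := hdecomp h hh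
  have hw' := hw.trans (by rintro _ ⟨j, rfl⟩; exact hV j)
  exact (hu.add (hw'.smul analyticAt_id)).congr (huw.mono fun t ht => ht.symm)

end Jacobian

theorem statement4_general {n k p : ℕ} (r : ℕ) (c : ℕ)
    (U : Set (Em 𝕜 n × Em 𝕜 k)) (hU0 : (0 : Em 𝕜 n × Em 𝕜 k) ∈ U)
    (F : Em 𝕜 n × Em 𝕜 k → Em 𝕜 p) (hF : AnalyticOnNhd 𝕜 F U)
    (f : Em 𝕜 n → Em 𝕜 k) (hf : AnalyticAt 𝕜 f 0)
    (X W : Set (Em 𝕜 n × Em 𝕜 k))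
    (hW : W = {z ∈ X | z.1 ≠ 0 ∧
      Module.finrank 𝕜 (LinearMap.range (fderiv 𝕜 F z : Em 𝕜 n × Em 𝕜 k →ₗ[𝕜] Em 𝕜 p)) = c})
    (φ : 𝕜 → Em 𝕜 n × Em 𝕜 k) (hφ : AnalyticAt 𝕜 φ 0) (hφ0 : φ 0 = 0)
    (hφW : ∀ᶠ t in 𝓝[≠] (0 : 𝕜), φ t ∈ W)
    (hjet : (fun t => (φ t).2 - f ((φ t).1)) =o[𝓝 (0 : 𝕜)] (fun t => ‖(φ t).1‖ ^ r)) :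
    (1 ≤ r →
      ((∀ h ∈ mnPow (r - 1) (JMyS F), MemPB (JMPS F f) φ (fun t => h (φ t))) ↔
       (∀ h ∈ mnPow r (JMyS F),
          MemPB (mnPow 1 (JMPS F f) ∪ IPJMy F f) φ (fun t => h (φ t))))) ∧
    (r = 0 →
      ((∀ h ∈ JMyS F, MemPB (mnPow 1 (JMPS F f)) φ (fun t => h (φ t))) ↔
       (∀ h ∈ mnPow 0 (JMyS F),
          MemPB (mnPow 1 (JMPS F f) ∪ IPJMy F f) φ (fun t => h (φ t))))) := by
  have hFφ : AnalyticAt 𝕜 F (φ 0) := hφ0 ▸ hF 0 hU0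
  have hfφ : AnalyticAt 𝕜 f (φ 0).1 := by rwa [hφ0, Prod.fst_zero]
  have hx : AnalyticAt 𝕜 (fun t => (φ t).1) 0 := analyticAt_fst.comp hφ
  have hyf : AnalyticAt 𝕜 (fun t => (φ t).2 - f (φ t).1) 0 :=
    (analyticAt_snd.comp hφ).sub (hfφ.comp (f := fun t => (φ t).1) hx)
  have hx_ne : ¬∀ᶠ t in 𝓝 0, (φ t).1 = 0 := fun hx0 =>
    ((hx0.filter_mono nhdsWithin_le_nhds).and hφW).exists.elim fun _ ⟨hxt, hWt⟩ =>
      (hW ▸ hWt).2.1 hxt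
  obtain ⟨d, V, hV, hV0, hxV⟩ := hx.exists_eventuallyEq_pow_smul_nonzero_iff.2 hx_ne
  simp only [sub_zero] at hxV
  obtain ⟨l, hl⟩ := Function.ne_iff.1 hV0
  obtain ⟨w, hw, hyfw⟩ := exists_eventuallyEq_smul_pow_of_isLittleO hV hl hxV hyf hjet
  have hreverse : (∀ h ∈ mnPow r (JMyS F),
      MemPB (mnPow 1 (JMPS F f) ∪ IPJMy F f) φ (fun t => h (φ t))) →
      ∀ h ∈ mnPow r (JMyS F), MemPB (mnPow 1 (JMPS F f)) φ (fun t => h (φ t)) :=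
    fun H _ hh => memPB_mnPow_one_JMPS_of_union (α₀ := Pi.single l r) (by simp)
      (fun j => analyticAt_pi_iff.1 hw j)
      (fun j => hyfw.mono fun t ht => by simpa [mono_single, mul_assoc] using congrFun ht j) H hh
  refine ⟨fun hr => ⟨fun H h hh => ?_, fun H h hh => ?_⟩, fun hr => ?_⟩
  · obtain ⟨l', h', hh', rfl⟩ :=
      exists_eq_coord_smul_of_mem_mnPow_succ ((Nat.sub_add_cancel hr).symm ▸ hh)
    exact ((H h' hh').coord_smul l').mono Set.subset_union_left
  · have hlh := coord_smul_mem_mnPow_succ l hh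
    rw [Nat.sub_add_cancel hr] at hlh
    obtain ⟨β, -, _, ⟨j, rfl⟩, rfl⟩ := hh
    exact (hreverse H _ hlh).of_smul_of_mnPow_one
      (eventually_ne_zero_of_eventuallyEq_pow_smul hV hl hxV)
      (exists_eventuallyEq_mul_of_eventuallyEq_pow_smul hV hl hxV)
      (by rintro _ ⟨i, rfl⟩; exact analyticAt_JMPgen_comp hFφ hfφ hφ i)
      ((analyticAt_mono_comp hx β).smul (analyticAt_dyF_comp hFφ hφ j))
  · subst hr
    exact ⟨fun H h hh => (H h (mem_mnPow_zero.1 hh)).mono Set.subset_union_left,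
      fun H h hh => hreverse H h (mem_mnPow_zero.2 hh)⟩

/-- **Lemma 2.9.**  With `X = F⁻¹(0)`, `Y = {0}×𝕜^k`, `W` the rank-`c` locus of `X − Y`,
`P = Γ(f)`, let `φ(t) = (x(t),y(t))` be an analytic curve in `W` (for `t ≠ 0`) through `0`
satisfying `|y(t) − f(x(t))| = o(|x(t)|^r)`.  Then
`φ*(m_n^{r-1} JM_y(F)) ⊆ φ*(JM(F)_P)` (if `r ≥ 1`), resp.
`φ*(JM_y(F)) ⊆ φ*(m_n JM(F)_P)` (if `r = 0`), holds iff
`φ*(m_n^r JM_y(F)) ⊆ φ*(m_n JM(F)_P + I(P) JM_y(F))`. -/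
theorem statement4 {n k p : ℕ} (r : ℕ) (c : ℕ)
    (U : Set (Em 𝕜 n × Em 𝕜 k)) (hUopen : IsOpen U) (hU0 : (0 : Em 𝕜 n × Em 𝕜 k) ∈ U)
    (F : Em 𝕜 n × Em 𝕜 k → Em 𝕜 p) (hF : AnalyticOnNhd 𝕜 F U)
    (f : Em 𝕜 n → Em 𝕜 k) (hf : AnalyticAt 𝕜 f 0) (hf0 : f 0 = 0)
    (X W : Set (Em 𝕜 n × Em 𝕜 k))
    (hX : X = {z ∈ U | F z = 0})
    (hW : W = {z ∈ X | z.1 ≠ 0 ∧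
      Module.finrank 𝕜 (LinearMap.range (fderiv 𝕜 F z : Em 𝕜 n × Em 𝕜 k →ₗ[𝕜] Em 𝕜 p)) = c})
    (φ : 𝕜 → Em 𝕜 n × Em 𝕜 k) (hφ : AnalyticAt 𝕜 φ 0) (hφ0 : φ 0 = 0)
    (hφW : ∀ᶠ t in 𝓝[≠] (0 : 𝕜), φ t ∈ W)
    (hjet : (fun t => (φ t).2 - f ((φ t).1)) =o[𝓝 (0 : 𝕜)] (fun t => ‖(φ t).1‖ ^ r)) :
    (1 ≤ r →
      ((∀ h ∈ mnPow (r - 1) (JMyS F), MemPB (JMPS F f) φ (fun t => h (φ t))) ↔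
       (∀ h ∈ mnPow r (JMyS F),
          MemPB (mnPow 1 (JMPS F f) ∪ IPJMy F f) φ (fun t => h (φ t))))) ∧
    (r = 0 →
      ((∀ h ∈ JMyS F, MemPB (mnPow 1 (JMPS F f)) φ (fun t => h (φ t))) ↔
       (∀ h ∈ mnPow 0 (JMyS F),
          MemPB (mnPow 1 (JMPS F f) ∪ IPJMy F f) φ (fun t => h (φ t))))) :=
  statement4_general r c U hU0 F hF f hf X W hW φ hφ hφ0 hφW hjet
end
end
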